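/- (Comparison of level sums, cf. eq. (2.6)) Fix sequences λ with λ_i > 0 and ρ with ρ_i ≥ 0, and suppose there exist c > 0 and m ≥ 1 such that ∏_{i=3}^{ℓ−2} (1 + λ_i/(1+D_i)) ≤ c·ℓ^m for all ℓ ≥ 5. Then there exist constants c_0 > 0 and m' ≥ 1, not depending on k or ℓ, such that for all integers k ≥ 2 and all 2 ≤ ℓ ≤ k, q_ℓ^{(k)} ≤ c_0 · ℓ^{m'} · q_2^{(k)}. -/

import Mathlib

open Filter Finset

/-- Final height of a `±1` path started at height `j`; `true` is a rise step,
`false` is a fall step. -/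
def endH : ℕ → List Bool → ℕ
  | j, [] => j
  | j, true :: s => endH (j + 1) s
  | j, false :: s => endH (j - 1) s

/-- `isDyck j s` holds when the path `s` started at height `j` never goes below height 0
(every fall step occurs from height ≥ 1). -/
def isDyck : ℕ → List Bool → Bool
  | _, [] => true
  | j, true :: s => isDyck (j + 1) s
  | j, false :: s => decide (1 ≤ j) && isDyck (j - 1) s

/-- `isJump j s` holds when the path `s` started at height `j` stays at height ≥ 1
(every fall step occurs from height ≥ 2). -/
def isJump : ℕ → List Bool → Bool
  | _, [] => true
  | j, true :: s => isJump (j + 1) s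
  | j, false :: s => decide (2 ≤ j) && isJump (j - 1) s

/-- Weight of a lattice path: a rise step from height `j` has weight `u j`, a fall step
from height `j+1` to `j` has weight `v j`. -/
noncomputable def dwt (u v : ℕ → ℝ) : ℕ → List Bool → ℝ
  | _, [] => 1
  | j, true :: s => u j * dwt u v (j + 1) s
  | j, false :: s => v (j - 1) * dwt u v (j - 1) s

/-- Weight `p(γ)` of a jump-chain path: an up-step from height `j` has weight
`λ_j/(1+λ_j+D_j)`, a down-step from height `j` has weight `1/(1+λ_j+D_j)`. -/
noncomputable def jwt (lam Dd : ℕ → ℝ) : ℕ → List Bool → ℝ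
  | _, [] => 1
  | j, true :: s => lam j / (1 + lam j + Dd j) * jwt lam Dd (j + 1) s
  | j, false :: s => 1 / (1 + lam j + Dd j) * jwt lam Dd (j - 1) s

/-- `D_j = Σ_{i=1}^j ρ_i`. -/
noncomputable def Dd (rho : ℕ → ℝ) (j : ℕ) : ℝ := ∑ i ∈ Finset.Icc 1 j, rho i

/-- `u(j) = λ_{j+1}/(1+λ_{j+1}+D_{j+1})`. -/
noncomputable def uWt (lam rho : ℕ → ℝ) (j : ℕ) : ℝ :=
  lam (j + 1) / (1 + lam (j + 1) + Dd rho (j + 1))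

/-- `v(j) = 1/(1+λ_{j+2}+D_{j+2})`. -/
noncomputable def vWt (lam rho : ℕ → ℝ) (j : ℕ) : ℝ :=
  1 / (1 + lam (j + 2) + Dd rho (j + 2))

/-- The weighted Catalan number `C_k`: the sum of `ω(γ)` over all Dyck paths `γ` of
length `2k` (paths of `k` rise and `k` fall steps from height 0 staying at height ≥ 0). -/
noncomputable def Ck (lam rho : ℕ → ℝ) (k : ℕ) : ℝ :=
  ∑ γ : Fin (2 * k) → Bool,
    if isDyck 0 (List.ofFn γ) = true ∧ endH 0 (List.ofFn γ) = 0 then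
      dwt (uWt lam rho) (vWt lam rho) 0 (List.ofFn γ)
    else 0

/-- The power series `Σ_k C_k z^k` as a formal multilinear series over `ℂ`. -/
noncomputable def gSeries (lam rho : ℕ → ℝ) : FormalMultilinearSeries ℂ ℂ ℂ :=
  fun n => FormalMultilinearSeries.ofScalars ℂ (fun k => (Ck lam rho k : ℂ)) n

/-- `M`, the radius of convergence of `g(z) = Σ_k C_k z^k`. -/
noncomputable def radiusM (lam rho : ℕ → ℝ) : ENNReal := (gSeries lam rho).radius

/-- `σ(ℓ) = ∏_{n=1}^ℓ 1/(1+D_n)`. -/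
noncomputable def sigmaWt (rho : ℕ → ℝ) (l : ℕ) : ℝ :=
  ∏ n ∈ Finset.Icc 1 l, 1 / (1 + Dd rho n)

/-- `q_ℓ^{(k)} = Σ_{γ ∈ Γ_ℓ^{(k)}} p(γ) σ(ℓ)`, where `Γ_ℓ^{(k)}` is the set of jump-chain
paths of length `2k − ℓ − 1` that start at height 1, stay at height ≥ 1, and whose final
step is an up-step ending at height `ℓ`. -/
noncomputable def qsum (lam rho : ℕ → ℝ) (k l : ℕ) : ℝ :=
  (∑ γ : Fin (2 * k - l - 1) → Bool,
    if isJump 1 (List.ofFn γ) = true ∧ endH 1 (List.ofFn γ) = l ∧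
        (List.ofFn γ).getLast? = some true then
      jwt lam (Dd rho) 1 (List.ofFn γ)
    else 0) * sigmaWt rho l

/-- `Γ_ℓ^{(k)}`, as a set of step lists. -/
def Gamma (k l : ℕ) : Set (List Bool) :=
  {s | s.length = 2 * k - l - 1 ∧ isJump 1 s = true ∧ endH 1 s = l ∧
    s.getLast? = some true}

/-- The path modification `γ ↦ γ̃`: insert `ℓ − 2` consecutive down-steps immediately
before the final (upward) step. -/
def tilde (l : ℕ) (s : List Bool) : List Bool :=
  s.dropLast ++ List.replicate (l - 2) false ++ [true]


/-! Inserting `ℓ - 2` down-steps before the final up-step (`tilde`) maps `Γ_ℓ^{(k)}` injectively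
into `Γ_2^{(k)}` and multiplies `p(γ) σ(ℓ)` by a factor `R(ℓ) = levelRatio` that does not depend
on `γ`: the last up-step from `ℓ - 1` is traded for the down-steps from `ℓ - 1, …, 2` and an
up-step from `1`, while `σ(ℓ) / σ(2) = ∏_{n=3}^{ℓ} 1/(1 + D_n)`. Hence `q_ℓ ≤ R(ℓ) q_2`.
Since `D` is nondecreasing, each factor `(1 + λ_j + D_j)/(1 + D_{j+1})` of `R(ℓ)` is at most
`1 + λ_j/(1 + D_j)`, and the growth hypothesis bounds the product of these by a power of `ℓ`. -/

theorem endH_append : ∀ (s t : List Bool) (j : ℕ), endH j (s ++ t) = endH (endH j s) t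
  | [], _, _ => rfl
  | true :: s, t, j => endH_append s t (j + 1)
  | false :: s, t, j => endH_append s t (j - 1)

theorem isJump_append : ∀ (s t : List Bool) (j : ℕ),
    isJump j (s ++ t) = (isJump j s && isJump (endH j s) t)
  | [], _, _ => rfl
  | true :: s, t, j => isJump_append s t (j + 1)
  | false :: s, t, j => by
    simp only [List.cons_append, isJump, endH, isJump_append s t (j - 1), Bool.and_assoc]

theorem jwt_append (lam D : ℕ → ℝ) : ∀ (s t : List Bool) (j : ℕ),
    jwt lam D j (s ++ t) = jwt lam D j s * jwt lam D (endH j s) t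
  | [], t, j => by simp [jwt, endH]
  | true :: s, t, j => by simp only [List.cons_append, jwt, endH, jwt_append lam D s t, mul_assoc]
  | false :: s, t, j => by simp only [List.cons_append, jwt, endH, jwt_append lam D s t, mul_assoc]

theorem endH_replicate_false (n j : ℕ) : endH (j + n) (List.replicate n false) = j := by
  induction n with
  | zero => rfl
  | succ n ih => simpa [List.replicate_succ, endH, ← add_assoc] using ih

theorem isJump_replicate_false (n j : ℕ) (hj : 1 ≤ j) :
    isJump (j + n) (List.replicate n false) = true := by
  induction n with
  | zero => rfl
  | succ n ih =>
    simp only [List.replicate_succ, isJump, Bool.and_eq_true, decide_eq_true_eq]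
    exact ⟨by omega, by simpa [← add_assoc] using ih⟩

theorem jwt_replicate_false (lam D : ℕ → ℝ) (n j : ℕ) :
    jwt lam D (j + n) (List.replicate n false) = ∏ i ∈ Ioc j (j + n), 1 / (1 + lam i + D i) := by
  induction n with
  | zero => simp [jwt]
  | succ n ih =>
    rw [List.replicate_succ, jwt, ← add_assoc, Nat.add_sub_cancel, ih,
      prod_Ioc_succ_top (Nat.le_add_right j n), mul_comm]

theorem jwt_nonneg {lam D : ℕ → ℝ} (hlam : ∀ i, 1 ≤ i → 0 ≤ lam i) (hD : ∀ i, 1 ≤ i → 0 ≤ D i) :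
    ∀ (s : List Bool) (j : ℕ), 1 ≤ j → isJump j s = true → 0 ≤ jwt lam D j s
  | [], _, _, _ => zero_le_one
  | true :: s, j, hj, hs => by
    have := hlam j hj; have := hD j hj
    exact mul_nonneg (by positivity) (jwt_nonneg hlam hD s (j + 1) (by omega) hs)
  | false :: s, j, hj, hs => by
    simp only [isJump, Bool.and_eq_true, decide_eq_true_eq] at hs
    have := hlam j hj; have := hD j hj
    exact mul_nonneg (by positivity) (jwt_nonneg hlam hD s (j - 1) (by omega) hs.2)

theorem tilde_injOn (l : ℕ) : Set.InjOn (tilde l) {s | s.getLast? = some true} := by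
  intro s hs t ht hst
  have hdrop : s.dropLast = t.dropLast := by
    simpa only [tilde, List.append_assoc, List.append_cancel_right_eq] using hst
  rw [← List.dropLast_append_getLast? true hs, ← List.dropLast_append_getLast? true ht, hdrop]

theorem tilde_append_true (l : ℕ) (t : List Bool) :
    tilde l (t ++ [true]) = t ++ List.replicate (l - 2) false ++ [true] := by
  simp [tilde]

theorem tilde_mem_Gamma {k l : ℕ} (hl : 2 ≤ l) {s : List Bool} (hs : s ∈ Gamma k l) :
    tilde l s ∈ Gamma k 2 := by
  obtain ⟨hlen, hjump, hend, hlast⟩ := hs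
  obtain ⟨t, rfl⟩ : ∃ t, s = t ++ [true] := ⟨_, (List.dropLast_append_getLast? true hlast).symm⟩
  have hend_t : endH 1 t = 1 + (l - 2) := by
    rw [endH_append] at hend
    simp only [endH] at hend
    omega
  rw [isJump_append, Bool.and_eq_true] at hjump
  rw [tilde_append_true]
  refine ⟨?_, ?_, ?_, by simp⟩
  · simp only [List.length_append, List.length_replicate, List.length_singleton] at hlen ⊢
    omega
  · simp only [isJump_append, endH_append, hend_t, hjump.1, isJump_replicate_false _ _ le_rfl,
      endH_replicate_false]
    rfl
  · simp only [endH_append, hend_t, endH_replicate_false]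
    rfl

theorem Dd_nonneg {rho : ℕ → ℝ} (hrho : ∀ i, 1 ≤ i → 0 ≤ rho i) (j : ℕ) : 0 ≤ Dd rho j :=
  sum_nonneg fun i hi => hrho i (mem_Icc.mp hi).1

theorem Dd_mono {rho : ℕ → ℝ} (hrho : ∀ i, 1 ≤ i → 0 ≤ rho i) : Monotone (Dd rho) :=
  fun _ _ h => sum_le_sum_of_subset_of_nonneg (Icc_subset_Icc_right h)
    fun i hi _ => hrho i (mem_Icc.mp hi).1

theorem sigmaWt_nonneg {rho : ℕ → ℝ} (hrho : ∀ i, 1 ≤ i → 0 ≤ rho i) (l : ℕ) :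
    0 ≤ sigmaWt rho l :=
  prod_nonneg fun i _ => one_div_nonneg.mpr (by linarith [Dd_nonneg hrho i])

theorem sigmaWt_eq_mul_prod (rho : ℕ → ℝ) {l : ℕ} (hl : 2 ≤ l) :
    sigmaWt rho l = sigmaWt rho 2 * ∏ j ∈ Ioc 1 (l - 1), 1 / (1 + Dd rho (j + 1)) := by
  obtain ⟨m, rfl⟩ : ∃ m, l = m + 1 := ⟨l - 1, by omega⟩
  have hshift : ∏ j ∈ Ioc 1 m, 1 / (1 + Dd rho (j + 1)) =
      ∏ n ∈ Ioc 2 (m + 1), 1 / (1 + Dd rho n) := by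
    rw [← map_add_right_Ioc 1 m 1, prod_map]
    rfl
  have hIcc : ∀ n, Icc 1 n = Ioc 0 n := fun n => Icc_add_one_left_eq_Ioc 0 n
  rw [Nat.add_sub_cancel, hshift, sigmaWt, sigmaWt, hIcc, hIcc,
    prod_Ioc_consecutive _ (by omega : 0 ≤ 2) hl]

noncomputable def levelRatio (lam rho : ℕ → ℝ) (l : ℕ) : ℝ :=
  lam (l - 1) / (1 + lam (l - 1) + Dd rho (l - 1)) * ((1 + lam 1 + Dd rho 1) / lam 1) *
    ∏ j ∈ Ioc 1 (l - 1), (1 + lam j + Dd rho j) / (1 + Dd rho (j + 1))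

theorem jwt_mul_sigmaWt_eq {lam rho : ℕ → ℝ} (hlam₁ : lam 1 ≠ 0)
    (hden : ∀ j, 1 ≤ j → 1 + lam j + Dd rho j ≠ 0) {l : ℕ} (hl : 2 ≤ l) {s : List Bool}
    (hend : endH 1 s = l) (hlast : s.getLast? = some true) :
    jwt lam (Dd rho) 1 s * sigmaWt rho l =
      levelRatio lam rho l * (jwt lam (Dd rho) 1 (tilde l s) * sigmaWt rho 2) := by
  obtain ⟨t, rfl⟩ : ∃ t, s = t ++ [true] := ⟨_, (List.dropLast_append_getLast? true hlast).symm⟩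
  have hend_t : endH 1 t = 1 + (l - 2) := by
    rw [endH_append] at hend
    simp only [endH] at hend
    omega
  have hl1 : 1 + (l - 2) = l - 1 := by omega
  have hjwt_s : jwt lam (Dd rho) 1 (t ++ [true]) =
      jwt lam (Dd rho) 1 t * (lam (l - 1) / (1 + lam (l - 1) + Dd rho (l - 1))) := by
    rw [jwt_append, hend_t, hl1]
    simp [jwt]
  have hjwt_tilde : jwt lam (Dd rho) 1 (tilde l (t ++ [true])) = jwt lam (Dd rho) 1 t *
      (∏ j ∈ Ioc 1 (l - 1), 1 / (1 + lam j + Dd rho j)) * (lam 1 / (1 + lam 1 + Dd rho 1)) := by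
    rw [tilde_append_true, jwt_append, jwt_append, endH_append, hend_t, jwt_replicate_false,
      endH_replicate_false, hl1]
    simp [jwt]
  have hcancel : (∏ j ∈ Ioc 1 (l - 1), (1 + lam j + Dd rho j) / (1 + Dd rho (j + 1))) *
      ∏ j ∈ Ioc 1 (l - 1), 1 / (1 + lam j + Dd rho j) =
      ∏ j ∈ Ioc 1 (l - 1), 1 / (1 + Dd rho (j + 1)) := by
    rw [← prod_mul_distrib]
    refine prod_congr rfl fun j hj => ?_
    have := hden j (mem_Ioc.mp hj).1.le
    field_simp
  have hcancel₁ : (1 + lam 1 + Dd rho 1) / lam 1 * (lam 1 / (1 + lam 1 + Dd rho 1)) = 1 := by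
    have := hden 1 le_rfl
    field_simp
  rw [hjwt_s, hjwt_tilde, sigmaWt_eq_mul_prod rho hl, levelRatio]
  -- after the two cancellations both sides are `p(t) · λ_{ℓ-1}/(…) · σ(2) · ∏ 1/(1 + D_{j+1})`
  linear_combination
    -(jwt lam (Dd rho) 1 t * (lam (l - 1) / (1 + lam (l - 1) + Dd rho (l - 1))) * sigmaWt rho 2) *
      ((1 + lam 1 + Dd rho 1) / lam 1 * (lam 1 / (1 + lam 1 + Dd rho 1)) * hcancel +
        (∏ j ∈ Ioc 1 (l - 1), 1 / (1 + Dd rho (j + 1))) * hcancel₁)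

theorem sum_ofFn_le_mul_sum_ofFn {α : Type*} [Fintype α] {n n' : ℕ} {S : Set (List α)}
    {g h : List α → ℝ} {R : ℝ} (f : List α → List α)
    (hlen : ∀ s ∈ S, s.length = n → (f s).length = n') (hinj : Set.InjOn f S)
    (hg : ∀ s ∉ S, g s = 0) (hgh : ∀ s ∈ S, g s ≤ R * h (f s)) (hR : 0 ≤ R)
    (hh : ∀ s, 0 ≤ h s) :
    ∑ γ : Fin n → α, g (List.ofFn γ) ≤ R * ∑ δ : Fin n' → α, h (List.ofFn δ) := by
  classical
  have hsum : ∀ (m : ℕ) (φ : List α → ℝ),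
      ∑ γ : Fin m → α, φ (List.ofFn γ) = ∑ s ∈ univ.image List.ofFn, φ s :=
    fun m φ => (sum_image fun _ _ _ _ h => List.ofFn_injective h).symm
  have hmem : ∀ (m : ℕ) (s : List α), s ∈ (univ : Finset (Fin m → α)).image List.ofFn ↔
      s.length = m := by
    refine fun m s => ⟨fun hs => ?_, fun hs => ?_⟩
    · obtain ⟨γ, -, rfl⟩ := mem_image.mp hs
      exact List.length_ofFn
    · subst hs
      exact mem_image.mpr ⟨_, mem_univ _, List.ofFn_get s⟩
  set L := (univ : Finset (Fin n → α)).image List.ofFn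
  rw [hsum, hsum, ← sum_filter_of_ne fun s _ hs => by_contra fun hS => hs (hg s hS)]
  calc ∑ s ∈ L with s ∈ S, g s
      ≤ ∑ s ∈ L with s ∈ S, R * h (f s) := sum_le_sum fun s hs => hgh s (mem_filter.mp hs).2
    _ = R * ∑ t ∈ (L.filter (· ∈ S)).image f, h t := by
      rw [mul_sum, sum_image fun s hs t ht => hinj (mem_filter.mp hs).2 (mem_filter.mp ht).2]
    _ ≤ R * ∑ t ∈ (univ : Finset (Fin n' → α)).image List.ofFn, h t := by
      refine mul_le_mul_of_nonneg_left (sum_le_sum_of_subset_of_nonneg ?_ fun t _ _ => hh t) hR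
      intro t ht
      obtain ⟨s, hs, rfl⟩ := mem_image.mp ht
      obtain ⟨hsL, hsS⟩ := mem_filter.mp hs
      exact (hmem _ _).mpr (hlen s hsS ((hmem _ _).mp hsL))

theorem qsum_eq_sum_indicator (lam rho : ℕ → ℝ) (k l : ℕ) :
    qsum lam rho k l = ∑ γ : Fin (2 * k - l - 1) → Bool,
      (Gamma k l).indicator (fun s => jwt lam (Dd rho) 1 s * sigmaWt rho l) (List.ofFn γ) := by
  rw [qsum, sum_mul]
  refine sum_congr rfl fun γ _ => ?_
  simp [Gamma, Set.indicator_apply, ite_mul]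

theorem jwt_mul_sigmaWt_nonneg_of_mem_Gamma {lam rho : ℕ → ℝ} (hlam : ∀ i, 1 ≤ i → 0 < lam i)
    (hrho : ∀ i, 1 ≤ i → 0 ≤ rho i) {k l : ℕ} {s : List Bool} (hs : s ∈ Gamma k l) :
    0 ≤ jwt lam (Dd rho) 1 s * sigmaWt rho l :=
  mul_nonneg (jwt_nonneg (fun i hi => (hlam i hi).le) (fun i _ => Dd_nonneg hrho i) s 1 le_rfl
    hs.2.1) (sigmaWt_nonneg hrho l)

theorem qsum_nonneg {lam rho : ℕ → ℝ} (hlam : ∀ i, 1 ≤ i → 0 < lam i)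
    (hrho : ∀ i, 1 ≤ i → 0 ≤ rho i) (k l : ℕ) : 0 ≤ qsum lam rho k l := by
  rw [qsum_eq_sum_indicator]
  exact sum_nonneg fun γ _ => Set.indicator_nonneg
    (fun _ hs => jwt_mul_sigmaWt_nonneg_of_mem_Gamma hlam hrho hs) _

theorem levelRatio_nonneg {lam rho : ℕ → ℝ} (hlam : ∀ i, 1 ≤ i → 0 < lam i)
    (hrho : ∀ i, 1 ≤ i → 0 ≤ rho i) {l : ℕ} (hl : 2 ≤ l) : 0 ≤ levelRatio lam rho l := by
  have hD := Dd_nonneg hrho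
  have := hlam (l - 1) (by omega)
  have := hlam 1 le_rfl
  have := hD 1
  have := hD (l - 1)
  refine mul_nonneg (by positivity) (prod_nonneg fun j hj => ?_)
  have := hlam j (mem_Ioc.mp hj).1.le
  have := hD j
  have := hD (j + 1)
  positivity

theorem qsum_le_levelRatio_mul {lam rho : ℕ → ℝ} (hlam : ∀ i, 1 ≤ i → 0 < lam i)
    (hrho : ∀ i, 1 ≤ i → 0 ≤ rho i) {k l : ℕ} (hl : 2 ≤ l) :
    qsum lam rho k l ≤ levelRatio lam rho l * qsum lam rho k 2 := by
  rw [qsum_eq_sum_indicator, qsum_eq_sum_indicator]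
  refine sum_ofFn_le_mul_sum_ofFn (tilde l) (fun s hs _ => (tilde_mem_Gamma hl hs).1)
    ((tilde_injOn l).mono fun s hs => hs.2.2.2) (fun s hs => Set.indicator_of_notMem hs _)
    (fun s hs => ?_) (levelRatio_nonneg hlam hrho hl)
    (fun _ => Set.indicator_nonneg (fun _ hs => jwt_mul_sigmaWt_nonneg_of_mem_Gamma hlam hrho hs) _)
  rw [Set.indicator_of_mem hs, Set.indicator_of_mem (tilde_mem_Gamma hl hs)]
  exact (jwt_mul_sigmaWt_eq (hlam 1 le_rfl).ne'
    (fun j hj => by linarith [hlam j hj, Dd_nonneg hrho j]) hl hs.2.2.1 hs.2.2.2).le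

theorem prod_Icc_three_pred_le {f : ℕ → ℝ} {c m : ℝ} (hc : 0 ≤ c) (hm : 0 ≤ m)
    (hf : ∀ l : ℕ, 5 ≤ l → ∏ i ∈ Icc 3 (l - 2), f i ≤ c * (l : ℝ) ^ m) {l : ℕ} (hl : 1 ≤ l) :
    ∏ i ∈ Icc 3 (l - 1), f i ≤ max 1 (c * 2 ^ m) * (l : ℝ) ^ m := by
  have hl' : (1 : ℝ) ≤ l := by exact_mod_cast hl
  have hpow : (1 : ℝ) ≤ (l : ℝ) ^ m := Real.one_le_rpow hl' hm
  rcases Nat.lt_or_ge l 4 with hsmall | hlarge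
  · rw [Icc_eq_empty_of_lt (by omega), prod_empty]
    nlinarith [le_max_left 1 (c * 2 ^ m)]
  · have hshift := hf (l + 1) (by omega)
    rw [show l + 1 - 2 = l - 1 by omega, Nat.cast_add_one] at hshift
    calc ∏ i ∈ Icc 3 (l - 1), f i ≤ c * ((l : ℝ) + 1) ^ m := hshift
      _ ≤ c * (2 * (l : ℝ)) ^ m := by gcongr; linarith
      _ = c * 2 ^ m * (l : ℝ) ^ m := by rw [Real.mul_rpow (by norm_num) (by positivity), mul_assoc]
      _ ≤ max 1 (c * 2 ^ m) * (l : ℝ) ^ m := by gcongr; exact le_max_right _ _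

theorem prod_Ioc_one_le_mul_prod_Icc_three {g : ℕ → ℝ} (hg : ∀ j, 2 ≤ j → 1 ≤ g j) (l : ℕ) :
    ∏ j ∈ Ioc 1 l, g j ≤ g 2 * ∏ j ∈ Icc 3 l, g j := by
  rw [← prod_insert (by simp)]
  refine prod_le_prod_of_subset_of_one_le (fun j hj => ?_) (fun j hj => ?_) (fun j hj _ => ?_)
  · rw [mem_insert, mem_Icc]
    rw [mem_Ioc] at hj
    omega
  · exact zero_le_one.trans (hg j (mem_Ioc.mp hj).1)
  · rw [mem_insert, mem_Icc] at hj
    exact hg j (by omega)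

theorem levelRatio_le {lam rho : ℕ → ℝ} (hlam : ∀ i, 1 ≤ i → 0 < lam i)
    (hrho : ∀ i, 1 ≤ i → 0 ≤ rho i) {l : ℕ} (hl : 2 ≤ l) :
    levelRatio lam rho l ≤
      (1 + lam 1 + Dd rho 1) / lam 1 * ∏ j ∈ Ioc 1 (l - 1), (1 + lam j / (1 + Dd rho j)) := by
  have hD := Dd_nonneg hrho
  have hfirst : lam (l - 1) / (1 + lam (l - 1) + Dd rho (l - 1)) ≤ 1 := by
    rw [div_le_one (by linarith [hlam (l - 1) (by omega), hD (l - 1)])]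
    linarith [hD (l - 1)]
  have hfactor : ∀ j ∈ Ioc 1 (l - 1), (1 + lam j + Dd rho j) / (1 + Dd rho (j + 1)) ≤
      1 + lam j / (1 + Dd rho j) := by
    intro j hj
    have := hlam j (mem_Ioc.mp hj).1.le
    have := hD j
    calc (1 + lam j + Dd rho j) / (1 + Dd rho (j + 1))
        ≤ (1 + lam j + Dd rho j) / (1 + Dd rho j) := by
          gcongr
          exact Dd_mono hrho (Nat.le_succ j)
      _ = 1 + lam j / (1 + Dd rho j) := by field_simp; ring
  have hfactor_nonneg : ∀ j ∈ Ioc 1 (l - 1),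
      0 ≤ (1 + lam j + Dd rho j) / (1 + Dd rho (j + 1)) := fun j hj => by
    have := hlam j (mem_Ioc.mp hj).1.le
    have := hD j
    have := hD (j + 1)
    positivity
  have hb : 0 ≤ (1 + lam 1 + Dd rho 1) / lam 1 := by
    have := hlam 1 le_rfl
    have := hD 1
    positivity
  calc levelRatio lam rho l
      ≤ 1 * ((1 + lam 1 + Dd rho 1) / lam 1) *
          ∏ j ∈ Ioc 1 (l - 1), (1 + lam j / (1 + Dd rho j)) :=
        mul_le_mul (mul_le_mul_of_nonneg_right hfirst hb) (prod_le_prod hfactor_nonneg hfactor)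
          (prod_nonneg hfactor_nonneg) (by positivity)
    _ = _ := by rw [one_mul]

theorem levelRatio_le_mul_rpow {lam rho : ℕ → ℝ} (hlam : ∀ i, 1 ≤ i → 0 < lam i)
    (hrho : ∀ i, 1 ≤ i → 0 ≤ rho i) {c m : ℝ} (hc : 0 ≤ c) (hm : 0 ≤ m)
    (hbound : ∀ l : ℕ, 5 ≤ l →
      (∏ i ∈ Icc 3 (l - 2), (1 + lam i / (1 + Dd rho i))) ≤ c * (l : ℝ) ^ m)
    {l : ℕ} (hl : 2 ≤ l) :
    levelRatio lam rho l ≤ (1 + lam 1 + Dd rho 1) / lam 1 * (1 + lam 2 / (1 + Dd rho 2)) *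
      max 1 (c * 2 ^ m) * (l : ℝ) ^ m := by
  have hgrowth : ∀ j, 1 ≤ j → 1 ≤ 1 + lam j / (1 + Dd rho j) := fun j hj => by
    have := hlam j hj
    have := Dd_nonneg hrho j
    simp only [le_add_iff_nonneg_right]
    positivity
  have hb : 0 ≤ (1 + lam 1 + Dd rho 1) / lam 1 := by
    have := hlam 1 le_rfl
    have := Dd_nonneg hrho 1
    positivity
  calc levelRatio lam rho l
      ≤ (1 + lam 1 + Dd rho 1) / lam 1 * ∏ j ∈ Ioc 1 (l - 1), (1 + lam j / (1 + Dd rho j)) :=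
        levelRatio_le hlam hrho hl
    _ ≤ (1 + lam 1 + Dd rho 1) / lam 1 * ((1 + lam 2 / (1 + Dd rho 2)) *
          ∏ j ∈ Icc 3 (l - 1), (1 + lam j / (1 + Dd rho j))) := by
        gcongr
        exact prod_Ioc_one_le_mul_prod_Icc_three (fun j hj => hgrowth j (by omega)) _
    _ ≤ (1 + lam 1 + Dd rho 1) / lam 1 * ((1 + lam 2 / (1 + Dd rho 2)) *
          (max 1 (c * 2 ^ m) * (l : ℝ) ^ m)) := by
        gcongr
        · exact zero_le_one.trans (hgrowth 2 (by norm_num))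
        · exact prod_Icc_three_pred_le hc hm hbound (by omega)
    _ = _ := by ring

/-- **Comparison of level sums (eq. (2.6)).** Under the product growth hypothesis,
there are constants `c₀ > 0` and `m' ≥ 1`, independent of `k` and `ℓ`, with
`q_ℓ^{(k)} ≤ c₀ ℓ^{m'} q_2^{(k)}` for all `2 ≤ ℓ ≤ k`. -/
theorem level_sum_comparison (lam rho : ℕ → ℝ)
    (hlam : ∀ i, 1 ≤ i → 0 < lam i) (hrho : ∀ i, 1 ≤ i → 0 ≤ rho i)
    (hyp : ∃ c : ℝ, 0 < c ∧ ∃ m : ℝ, 1 ≤ m ∧ ∀ l : ℕ, 5 ≤ l →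
      (∏ i ∈ Finset.Icc 3 (l - 2), (1 + lam i / (1 + Dd rho i))) ≤ c * (l : ℝ) ^ m) :
    ∃ c₀ : ℝ, 0 < c₀ ∧ ∃ m' : ℝ, 1 ≤ m' ∧ ∀ k l : ℕ, 2 ≤ k → 2 ≤ l → l ≤ k →
      qsum lam rho k l ≤ c₀ * (l : ℝ) ^ m' * qsum lam rho k 2 := by
  obtain ⟨c, hc, m, hm, hbound⟩ := hyp
  have hc₀ : 0 < (1 + lam 1 + Dd rho 1) / lam 1 * (1 + lam 2 / (1 + Dd rho 2)) *
      max 1 (c * 2 ^ m) := by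
    have := hlam 1 le_rfl
    have := hlam 2 (by norm_num)
    have := Dd_nonneg hrho 1
    have := Dd_nonneg hrho 2
    positivity
  refine ⟨_, hc₀, m, hm, fun k l _ hl _ => ?_⟩
  calc qsum lam rho k l ≤ levelRatio lam rho l * qsum lam rho k 2 :=
      qsum_le_levelRatio_mul hlam hrho hl
    _ ≤ _ := mul_le_mul_of_nonneg_right
      (levelRatio_le_mul_rpow hlam hrho hc.le (by linarith) hbound hl) (qsum_nonneg hlam hrho k 2)
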